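/- arXiv:2501.12938 — 4 statements merged into one kernel-verified Lean document; each statement's English description precedes it below -/
import Mathlib

section
/- (Reverse direction of Claim 2, proved in Appendix A.) For any λ ≥ 0 and any ε ∈ (0,1), the minimum over u ∈ Δ and p ∈ B_KL(P₁, λ) of D(p ‖ (1−ε)P₀ + εu) is less than or equal to the minimum over ρ ∈ [0,1] and q,v ∈ Δ satisfying D((1−ρ)q + ρv ‖ P₁) ≤ λ of the quantity D₂(ρ‖ε) + (1−ρ)·D(q‖P₀). -/
open scoped BigOperators ENNReal Classical
open Filter

noncomputable section

/-- The set of probability distributions on a finite alphabet. -/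
def simplex (𝒳 : Type*) [Fintype 𝒳] : Set (𝒳 → ℝ) :=
  {p | (∀ x, 0 ≤ p x) ∧ ∑ x, p x = 1}

/-- Kullback–Leibler divergence, with values in `[0,∞]`. -/
def KL {𝒳 : Type*} [Fintype 𝒳] (p q : 𝒳 → ℝ) : ℝ≥0∞ :=
  if ∀ x, q x = 0 → p x = 0 then
    ENNReal.ofReal (∑ x, p x * Real.log (p x / q x))
  else ⊤

/-- KL ball of radius `r` around `p`. -/
def BKL {𝒳 : Type*} [Fintype 𝒳] (p : 𝒳 → ℝ) (r : ℝ) : Set (𝒳 → ℝ) :=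
  {q | q ∈ simplex 𝒳 ∧ KL q p ≤ ENNReal.ofReal r}

/-- Mixture `(1-a) p + a q`. -/
def mix {𝒳 : Type*} (a : ℝ) (p q : 𝒳 → ℝ) : 𝒳 → ℝ :=
  fun x => (1 - a) * p x + a * q x

/-- Binary KL divergence `D₂(ρ‖ε)`. -/
def D2 (ρ ε : ℝ) : ℝ≥0∞ :=
  KL (fun b : Bool => if b then ρ else 1 - ρ) (fun b : Bool => if b then ε else 1 - ε)

/-- Total variation distance. -/
def dTV {𝒳 : Type*} [Fintype 𝒳] (p q : 𝒳 → ℝ) : ℝ :=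
  (∑ x, |p x - q x|) / 2

/-- Empirical type of a string. -/
def typeOf {𝒳 : Type*} [Fintype 𝒳] [DecidableEq 𝒳] {n : ℕ} (x : Fin n → 𝒳) : 𝒳 → ℝ :=
  fun a => ((Finset.univ.filter fun i => x i = a).card : ℝ) / n

/-- i.i.d. probability of a string. -/
def iid {𝒳 : Type*} [Fintype 𝒳] (P : 𝒳 → ℝ) {n : ℕ} (x : Fin n → 𝒳) : ℝ :=
  ∏ i, P (x i)

/-- Probability of `z` under i.i.d. Bernoulli(ε). -/
def berW (ε : ℝ) {n : ℕ} (z : Fin n → Bool) : ℝ :=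
  ∏ i, if z i then ε else 1 - ε

/-- Hamming weight. -/
def wt {n : ℕ} (z : Fin n → Bool) : ℕ :=
  (Finset.univ.filter fun i => z i = true).card

/-- Probability of `z` under the uniform distribution on weight-⌈nε⌉ binary vectors. -/
def unifW (ε : ℝ) {n : ℕ} (z : Fin n → Bool) : ℝ :=
  if wt z = Nat.ceil ((n : ℝ) * ε) then
    (1 : ℝ) / ((Finset.univ.filter fun z' : Fin n → Bool => wt z' = Nat.ceil ((n : ℝ) * ε)).card : ℝ)
  else 0

/-- `liminf -(1/n) log E(n) ≥ l` (in the extended reals). -/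
def ExpLB (E : ℕ → ℝ) (l : ℝ) : Prop :=
  (l : EReal) ≤ Filter.liminf (fun n : ℕ => ((-(Real.log (E n)) / n : ℝ) : EReal)) Filter.atTop

/-! Put `u := v` and `p := (1-ρ)q + ρv`. Pointwise, the two-term log-sum inequality splits
`D(p ‖ (1-ε)P₀ + εv)` into the contributions of `(1-ρ)q` against `(1-ε)P₀` and of `ρv` against
`εv`; summing over `𝒳`, these add up to `D₂(ρ‖ε) + (1-ρ) D(q‖P₀) + ρ D(v‖v)`, and `D(v‖v) = 0`. -/

namespace Real

theorem add_mul_log_div_add_le {a b c d : ℝ} (ha : 0 ≤ a) (hb : 0 ≤ b) (hc : 0 ≤ c) (hd : 0 ≤ d)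
    (hac : c = 0 → a = 0) (hbd : d = 0 → b = 0) :
    (a + b) * log ((a + b) / (c + d)) ≤ a * log (a / c) + b * log (b / d) := by
  rcases (add_nonneg hc hd).eq_or_lt with hcd | hcd
  · obtain ⟨rfl, rfl⟩ : c = 0 ∧ d = 0 := ⟨by linarith, by linarith⟩
    simp [hac rfl, hbd rfl]
  -- both identities also hold for `c = 0`, because then `a = 0`
  have weight {a c : ℝ} (t : ℝ) (hac : c = 0 → a = 0) :
      c / t * (a / c) = a / t ∧ c / t * (a / c * log (a / c)) = a * log (a / c) / t := by
    rcases eq_or_ne c 0 with rfl | hc0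
    · simp [hac rfl]
    · constructor <;> field_simp
  obtain ⟨hac₁, hac₂⟩ := weight (c + d) hac
  obtain ⟨hbd₁, hbd₂⟩ := weight (c + d) hbd
  have key := convexOn_mul_log.2 (Set.mem_Ici.2 (div_nonneg ha hc))
    (Set.mem_Ici.2 (div_nonneg hb hd)) (by positivity) (by positivity)
    (by field_simp : c / (c + d) + d / (c + d) = 1)
  simp only [smul_eq_mul, hac₁, hac₂, hbd₁, hbd₂, ← add_div] at key
  rwa [div_mul_eq_mul_div, div_le_div_iff_of_pos_right hcd] at key

theorem mul_mul_log_mul_div_mul {t s a b : ℝ} (hs : s ≠ 0) (hba : b = 0 → a = 0) :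
    t * a * log (t * a / (s * b)) = t * log (t / s) * a + t * (a * log (a / b)) := by
  rcases eq_or_ne t 0 with rfl | ht
  · simp
  rcases eq_or_ne a 0 with rfl | ha
  · simp
  have hb : b ≠ 0 := mt hba ha
  rw [← div_mul_div_comm, log_mul (div_ne_zero ht hs) (div_ne_zero ha hb)]
  ring

end Real

open Real

section Divergence

variable {𝒳 : Type*} [Fintype 𝒳]

def klSum (p q : 𝒳 → ℝ) : ℝ :=
  ∑ x, p x * log (p x / q x)

theorem KL_eq_ofReal_klSum {p q : 𝒳 → ℝ} (hpq : ∀ x, q x = 0 → p x = 0) :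
    KL p q = ENNReal.ofReal (klSum p q) :=
  if_pos hpq

theorem KL_self (p : 𝒳 → ℝ) : KL p p = 0 := by
  rw [KL_eq_ofReal_klSum fun _ => id, klSum, ENNReal.ofReal_eq_zero]
  refine (Finset.sum_eq_zero fun x _ => ?_).le
  rcases eq_or_ne (p x) 0 with h | h <;> simp [h]

theorem D2_eq_ofReal {ρ ε : ℝ} (hε : 0 < ε) (hε1 : ε < 1) :
    D2 ρ ε = ENNReal.ofReal (ρ * log (ρ / ε) + (1 - ρ) * log ((1 - ρ) / (1 - ε))) := by
  rw [D2, KL_eq_ofReal_klSum, klSum, Fintype.sum_bool]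
  · simp
  · rintro (_ | _) h <;> simp only [if_true, if_false, Bool.false_eq_true] at h <;> linarith

theorem mix_mem_simplex {ρ : ℝ} (hρ : ρ ∈ Set.Icc (0 : ℝ) 1) {q v : 𝒳 → ℝ}
    (hq : q ∈ simplex 𝒳) (hv : v ∈ simplex 𝒳) : mix ρ q v ∈ simplex 𝒳 := by
  refine ⟨fun x => ?_, ?_⟩
  · exact add_nonneg (mul_nonneg (by linarith [hρ.2]) (hq.1 x)) (mul_nonneg hρ.1 (hv.1 x))
  · simp only [mix, Finset.sum_add_distrib, ← Finset.mul_sum, hq.2, hv.2]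
    ring

theorem sum_mul_mul_log_mul_div_mul {t s : ℝ} (hs : s ≠ 0) {q P : 𝒳 → ℝ}
    (hq : ∑ x, q x = 1) (hqP : ∀ x, P x = 0 → q x = 0) :
    ∑ x, t * q x * log (t * q x / (s * P x)) = t * log (t / s) + t * klSum q P := by
  simp only [mul_mul_log_mul_div_mul hs (hqP _), Finset.sum_add_distrib, ← Finset.mul_sum, hq,
    mul_one, klSum]

variable {ρ ε : ℝ} {q v P w : 𝒳 → ℝ}

theorem klSum_mix_le (hρ : ρ ∈ Set.Icc (0 : ℝ) 1) (hε : 0 < ε) (hε1 : ε < 1)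
    (hq : q ∈ simplex 𝒳) (hv : v ∈ simplex 𝒳) (hP : ∀ x, 0 ≤ P x) (hw : ∀ x, 0 ≤ w x)
    (hqP : ∀ x, P x = 0 → q x = 0) (hvw : ∀ x, w x = 0 → v x = 0) :
    klSum (mix ρ q v) (mix ε P w) ≤
      (ρ * log (ρ / ε) + (1 - ρ) * log ((1 - ρ) / (1 - ε))) +
        (1 - ρ) * klSum q P + ρ * klSum v w := by
  have hρ1 : 0 ≤ 1 - ρ := by linarith [hρ.2]
  have hε1' : 0 < 1 - ε := by linarith
  calc klSum (mix ρ q v) (mix ε P w)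
      ≤ ∑ x, ((1 - ρ) * q x * log ((1 - ρ) * q x / ((1 - ε) * P x)) +
          ρ * v x * log (ρ * v x / (ε * w x))) := by
        refine Finset.sum_le_sum fun x _ => add_mul_log_div_add_le
          (mul_nonneg hρ1 (hq.1 x)) (mul_nonneg hρ.1 (hv.1 x))
          (mul_nonneg hε1'.le (hP x)) (mul_nonneg hε.le (hw x)) (fun h => ?_) (fun h => ?_)
        · rw [hqP x ((mul_eq_zero.1 h).resolve_left hε1'.ne'), mul_zero]
        · rw [hvw x ((mul_eq_zero.1 h).resolve_left hε.ne'), mul_zero]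
    _ = _ := by
        rw [Finset.sum_add_distrib, sum_mul_mul_log_mul_div_mul hε1'.ne' hq.2 hqP,
          sum_mul_mul_log_mul_div_mul hε.ne' hv.2 hvw]
        ring

theorem KL_mix_le (hρ : ρ ∈ Set.Icc (0 : ℝ) 1) (hε : 0 < ε) (hε1 : ε < 1)
    (hq : q ∈ simplex 𝒳) (hv : v ∈ simplex 𝒳) (hP : ∀ x, 0 ≤ P x) (hw : ∀ x, 0 ≤ w x)
    (hqP : ∀ x, P x = 0 → q x = 0) (hvw : ∀ x, w x = 0 → v x = 0) :
    KL (mix ρ q v) (mix ε P w) ≤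
      D2 ρ ε + ENNReal.ofReal (1 - ρ) * KL q P + ENNReal.ofReal ρ * KL v w := by
  have hε1' : 0 < 1 - ε := by linarith
  have hmix (x : 𝒳) (h : mix ε P w x = 0) : mix ρ q v x = 0 := by
    obtain ⟨hPx, hwx⟩ :=
      (add_eq_zero_iff_of_nonneg (mul_nonneg hε1'.le (hP x)) (mul_nonneg hε.le (hw x))).1 h
    simp [mix, hqP x ((mul_eq_zero.1 hPx).resolve_left hε1'.ne'),
      hvw x ((mul_eq_zero.1 hwx).resolve_left hε.ne')]
  rw [KL_eq_ofReal_klSum hmix, KL_eq_ofReal_klSum hqP, KL_eq_ofReal_klSum hvw,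
    D2_eq_ofReal hε hε1, ← ENNReal.ofReal_mul (by linarith [hρ.2]), ← ENNReal.ofReal_mul hρ.1]
  calc ENNReal.ofReal (klSum (mix ρ q v) (mix ε P w))
      ≤ ENNReal.ofReal ((ρ * log (ρ / ε) + (1 - ρ) * log ((1 - ρ) / (1 - ε))) +
          (1 - ρ) * klSum q P + ρ * klSum v w) :=
        ENNReal.ofReal_le_ofReal (klSum_mix_le hρ hε hε1 hq hv hP hw hqP hvw)
    _ ≤ _ := ENNReal.ofReal_add_le.trans (add_le_add_left ENNReal.ofReal_add_le _)

end Divergence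

theorem claim2_reverse_general {𝒳 : Type*} [Fintype 𝒳]
    (P0 P1 : 𝒳 → ℝ) (hfs0 : ∀ x, 0 < P0 x)
    {ε lam : ℝ} (hε : 0 < ε) (hε1 : ε < 1) :
    (⨅ u ∈ simplex 𝒳, ⨅ p ∈ BKL P1 lam, KL p (mix ε P0 u)) ≤
      ⨅ ρ ∈ Set.Icc (0:ℝ) 1, ⨅ q ∈ simplex 𝒳, ⨅ v ∈ simplex 𝒳,
        ⨅ (_ : KL (mix ρ q v) P1 ≤ ENNReal.ofReal lam),
          D2 ρ ε + ENNReal.ofReal (1 - ρ) * KL q P0 := by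
  refine le_iInf₂ fun ρ hρ => le_iInf₂ fun q hq => le_iInf₂ fun v hv => le_iInf fun hfeas => ?_
  calc (⨅ u ∈ simplex 𝒳, ⨅ p ∈ BKL P1 lam, KL p (mix ε P0 u))
      ≤ KL (mix ρ q v) (mix ε P0 v) :=
        (iInf₂_le v hv).trans (iInf₂_le _ ⟨mix_mem_simplex hρ hq hv, hfeas⟩)
    _ ≤ D2 ρ ε + ENNReal.ofReal (1 - ρ) * KL q P0 + ENNReal.ofReal ρ * KL v v :=
        KL_mix_le hρ hε hε1 hq hv (fun x => (hfs0 x).le) hv.1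
          (fun x h => absurd h (hfs0 x).ne') fun _ => id
    _ = D2 ρ ε + ENNReal.ofReal (1 - ρ) * KL q P0 := by rw [KL_self, mul_zero, add_zero]

/-- **Reverse direction of Claim 2** (Appendix A): for any `λ ≥ 0` and `ε ∈ (0,1)`,
the minimum over `u ∈ Δ`, `p ∈ B_KL(P1,λ)` of `D(p ‖ (1-ε)P0 + εu)` is at most the
minimum over `ρ ∈ [0,1]`, `q,v ∈ Δ` with `D((1-ρ)q + ρv ‖ P1) ≤ λ` of
`D₂(ρ‖ε) + (1-ρ) D(q‖P0)`. -/
theorem claim2_reverse {𝒳 : Type*} [Fintype 𝒳] [Nonempty 𝒳]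
    (P0 P1 : 𝒳 → ℝ) (hP0 : P0 ∈ simplex 𝒳) (hP1 : P1 ∈ simplex 𝒳)
    (hfs0 : ∀ x, 0 < P0 x) (hfs1 : ∀ x, 0 < P1 x) (hne : P0 ≠ P1)
    {ε lam : ℝ} (hε : 0 < ε) (hε1 : ε < 1) (hlam : 0 ≤ lam) :
    (⨅ u ∈ simplex 𝒳, ⨅ p ∈ BKL P1 lam, KL p (mix ε P0 u)) ≤
      ⨅ ρ ∈ Set.Icc (0:ℝ) 1, ⨅ q ∈ simplex 𝒳, ⨅ v ∈ simplex 𝒳,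
        ⨅ (_ : KL (mix ρ q v) P1 ≤ ENNReal.ofReal lam),
          D2 ρ ε + ENNReal.ofReal (1 - ρ) * KL q P0 :=
  claim2_reverse_general P0 P1 hfs0 hε hε1
end
end

section
/- (Appendix C continuity claim, converse side.) Fix ε ∈ (0,1) and λ > 0. Define, for t > 0, M(t) = min over q₁, v ∈ Δ such that (1−ε)q₁ + εv ∈ B_KL(P₁, t) of D(q₁‖P₀). Then lim_{δ→0⁺} M(λ−2δ) = M(λ), where the limit is over δ ∈ (0, λ/2). -/
open scoped BigOperators ENNReal Classical
open Filter

noncomputable section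

/-- `M(t) = min_{q₁,v ∈ Δ : (1-ε)q₁+εv ∈ B_KL(P1,t)} D(q₁‖P0)`. -/
def Mfw {𝒳 : Type*} [Fintype 𝒳] (P0 P1 : 𝒳 → ℝ) (ε t : ℝ) : ℝ≥0∞ :=
  ⨅ q1 ∈ simplex 𝒳, ⨅ v ∈ simplex 𝒳,
    ⨅ (_ : mix ε q1 v ∈ BKL P1 t), KL q1 P0

/-!
Since `M` is antitone, only `limsup M(λ - 2δ) ≤ M(λ)` needs proof. Take a feasible pair `(q₁, v)`
at radius `λ` and pull both towards `P₁`: `q₁ₛ = (1-s) q₁ + s P₁`, `vₛ = (1-s) v + s P₁`. Their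
`ε`-mixture is the mixture of the old one with `P₁`, so by convexity of `t ↦ t log t` its divergence
from `P₁` drops to at most `(1-s) λ`, making `(q₁ₛ, vₛ)` feasible at radius `λ - 2δ` once `2δ ≤ sλ`.
Meanwhile `D(q₁ₛ‖P₀) → D(q₁‖P₀)` as `s → 0`, because `D(·‖P₀)` is continuous when `P₀ > 0`.
-/

open scoped Topology

section Mix

variable {𝒳 : Type*}

lemma mix_zero (p q : 𝒳 → ℝ) : mix 0 p q = p := by
  funext x; simp [mix]

lemma mix_mix_mix_right (ε s : ℝ) (q v p : 𝒳 → ℝ) :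
    mix ε (mix s q p) (mix s v p) = mix s (mix ε q v) p := by
  funext x; simp only [mix]; ring

lemma continuous_mix_left (p q : 𝒳 → ℝ) : Continuous fun s => mix s p q :=
  continuous_pi fun x => by simp only [mix]; fun_prop

end Mix

section Divergence

variable {𝒳 : Type*} [Fintype 𝒳]

lemma mix_mem_simplex_s12 {p q : 𝒳 → ℝ} (hp : p ∈ simplex 𝒳) (hq : q ∈ simplex 𝒳) {a : ℝ}
    (h0 : 0 ≤ a) (h1 : a ≤ 1) : mix a p q ∈ simplex 𝒳 := by
  refine ⟨fun x => ?_, ?_⟩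
  · have := hp.1 x; have := hq.1 x
    simp only [mix]; nlinarith
  · simp only [mix]
    rw [Finset.sum_add_distrib, ← Finset.mul_sum, ← Finset.mul_sum, hp.2, hq.2]
    ring

lemma KL_of_pos (p : 𝒳 → ℝ) {q : 𝒳 → ℝ} (hq : ∀ x, 0 < q x) :
    KL p q = ENNReal.ofReal (∑ x, p x * Real.log (p x / q x)) :=
  if_pos fun x hx => absurd hx (hq x).ne'

lemma continuous_mul_log_div {c : ℝ} (hc : 0 < c) :
    Continuous fun t : ℝ => t * Real.log (t / c) := by
  have h : (fun t : ℝ => t * Real.log (t / c)) = fun t => t * Real.log t - t * Real.log c := by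
    funext t
    rcases eq_or_ne t 0 with rfl | ht
    · simp
    · rw [Real.log_div ht hc.ne']; ring
  rw [h]
  exact Real.continuous_mul_log.sub (continuous_id.mul continuous_const)

lemma continuous_KL_left {q : 𝒳 → ℝ} (hq : ∀ x, 0 < q x) : Continuous fun p => KL p q := by
  simp only [KL_of_pos _ hq]
  exact ENNReal.continuous_ofReal.comp <| continuous_finsetSum _ fun x _ =>
    (continuous_mul_log_div (hq x)).comp (continuous_apply x)

/-- Perspective form of the convexity of `t ↦ t log t`, between `a / c` and `1`. -/
lemma mul_log_div_mix_le {a c s : ℝ} (ha : 0 ≤ a) (hc : 0 < c) (hs0 : 0 ≤ s) (hs1 : s ≤ 1) :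
    ((1 - s) * a + s * c) * Real.log (((1 - s) * a + s * c) / c)
      ≤ (1 - s) * (a * Real.log (a / c)) := by
  have hconv := Real.convexOn_mul_log.2 (Set.mem_Ici.2 (div_nonneg ha hc.le))
    (Set.mem_Ici.2 zero_le_one) (sub_nonneg.2 hs1) hs0 (by ring)
  simp only [smul_eq_mul, mul_one, Real.log_one, mul_zero, add_zero] at hconv
  have hmix : (1 - s) * a + s * c = c * ((1 - s) * (a / c) + s) := by field_simp
  have hdiv : ((1 - s) * a + s * c) / c = (1 - s) * (a / c) + s := by field_simp
  calc ((1 - s) * a + s * c) * Real.log (((1 - s) * a + s * c) / c)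
      = c * (((1 - s) * (a / c) + s) * Real.log ((1 - s) * (a / c) + s)) := by
        rw [hdiv, hmix, mul_assoc]
    _ ≤ c * ((1 - s) * (a / c * Real.log (a / c))) := by gcongr
    _ = (1 - s) * (a * Real.log (a / c)) := by field_simp

lemma KL_mix_left_le {m p : 𝒳 → ℝ} (hm : ∀ x, 0 ≤ m x) (hp : ∀ x, 0 < p x) {s : ℝ}
    (hs0 : 0 ≤ s) (hs1 : s ≤ 1) : KL (mix s m p) p ≤ ENNReal.ofReal (1 - s) * KL m p := by
  rw [KL_of_pos _ hp, KL_of_pos _ hp, ← ENNReal.ofReal_mul (sub_nonneg.2 hs1), Finset.mul_sum]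
  exact ENNReal.ofReal_le_ofReal <| Finset.sum_le_sum fun x _ =>
    mul_log_div_mix_le (hm x) (hp x) hs0 hs1

end Divergence

section Mfw

variable {𝒳 : Type*} [Fintype 𝒳] {P0 P1 : 𝒳 → ℝ} {ε : ℝ}

lemma Mfw_antitone : Antitone (Mfw P0 P1 ε) := fun _ _ h =>
  iInf₂_mono fun _ _ => iInf₂_mono fun _ _ => iInf_mono' fun hc =>
    ⟨⟨hc.1, hc.2.trans (ENNReal.ofReal_le_ofReal h)⟩, le_rfl⟩

lemma Mfw_le_KL {t : ℝ} {q1 v : 𝒳 → ℝ} (hq1 : q1 ∈ simplex 𝒳) (hv : v ∈ simplex 𝒳)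
    (hmix : mix ε q1 v ∈ BKL P1 t) : Mfw P0 P1 ε t ≤ KL q1 P0 :=
  (iInf₂_le q1 hq1).trans <| (iInf₂_le v hv).trans <| iInf_le _ hmix

lemma Mfw_mul_le_KL_mix (hP1 : P1 ∈ simplex 𝒳) (hfs1 : ∀ x, 0 < P1 x) {t s : ℝ}
    (hs0 : 0 ≤ s) (hs1 : s ≤ 1) {q1 v : 𝒳 → ℝ} (hq1 : q1 ∈ simplex 𝒳) (hv : v ∈ simplex 𝒳)
    (hmix : mix ε q1 v ∈ BKL P1 t) :
    Mfw P0 P1 ε ((1 - s) * t) ≤ KL (mix s q1 P1) P0 := by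
  refine Mfw_le_KL (mix_mem_simplex_s12 hq1 hP1 hs0 hs1) (v := mix s v P1)
    (mix_mem_simplex_s12 hv hP1 hs0 hs1) ?_
  rw [mix_mix_mix_right]
  refine ⟨mix_mem_simplex_s12 hmix.1 hP1 hs0 hs1, ?_⟩
  calc KL (mix s (mix ε q1 v) P1) P1
      ≤ ENNReal.ofReal (1 - s) * KL (mix ε q1 v) P1 := KL_mix_left_le hmix.1.1 hfs1 hs0 hs1
    _ ≤ ENNReal.ofReal (1 - s) * ENNReal.ofReal t := by gcongr; exact hmix.2
    _ = ENNReal.ofReal ((1 - s) * t) := (ENNReal.ofReal_mul (sub_nonneg.2 hs1)).symm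

end Mfw

theorem appendixC_continuity_converse_general {𝒳 : Type*} [Fintype 𝒳]
    (P0 P1 : 𝒳 → ℝ) (hP1 : P1 ∈ simplex 𝒳)
    (hfs0 : ∀ x, 0 < P0 x) (hfs1 : ∀ x, 0 < P1 x)
    {ε lam : ℝ} (hlam : 0 < lam) :
    Filter.Tendsto (fun δ : ℝ => Mfw P0 P1 ε (lam - 2 * δ))
      (nhdsWithin 0 (Set.Ioo 0 (lam / 2))) (nhds (Mfw P0 P1 ε lam)) := by
  refine tendsto_order.2 ⟨fun a ha => ?_, fun b hb => ?_⟩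
  · filter_upwards [self_mem_nhdsWithin] with δ hδ
    exact ha.trans_le (Mfw_antitone (by linarith [hδ.1]))
  obtain ⟨q1, hq1, v, hv, hmix, hb⟩ : ∃ q1 ∈ simplex 𝒳, ∃ v ∈ simplex 𝒳,
      mix ε q1 v ∈ BKL P1 lam ∧ KL q1 P0 < b := by
    simpa only [Mfw, iInf_lt_iff, exists_prop] using hb
  have hKL : Tendsto (fun s => KL (mix s q1 P1) P0) (𝓝[>] 0) (𝓝 (KL q1 P0)) := by
    have hcont : Continuous fun s => KL (mix s q1 P1) P0 :=
      (continuous_KL_left hfs0).comp (continuous_mix_left q1 P1)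
    simpa only [mix_zero] using (hcont.tendsto 0).mono_left nhdsWithin_le_nhds
  have hunit : ∀ᶠ s in 𝓝[>] (0 : ℝ), s ∈ Set.Ioo 0 1 := Ioo_mem_nhdsGT one_pos
  obtain ⟨s, hsb, hs0, hs1⟩ := ((hKL.eventually_lt_const hb).and hunit).exists
  filter_upwards [nhdsWithin_le_nhds (Iio_mem_nhds (by positivity : 0 < s * lam / 2))] with δ hδ
  calc Mfw P0 P1 ε (lam - 2 * δ)
      ≤ Mfw P0 P1 ε ((1 - s) * lam) := Mfw_antitone (by linarith [Set.mem_Iio.1 hδ])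
    _ ≤ KL (mix s q1 P1) P0 := Mfw_mul_le_KL_mix hP1 hfs1 hs0.le hs1.le hq1 hv hmix
    _ < b := hsb

/-- **Appendix C continuity claim (converse side)**: `M(λ-2δ) → M(λ)` as `δ → 0⁺`
over `δ ∈ (0, λ/2)`. -/
theorem appendixC_continuity_converse {𝒳 : Type*} [Fintype 𝒳] [Nonempty 𝒳]
    (P0 P1 : 𝒳 → ℝ) (hP0 : P0 ∈ simplex 𝒳) (hP1 : P1 ∈ simplex 𝒳)
    (hfs0 : ∀ x, 0 < P0 x) (hfs1 : ∀ x, 0 < P1 x) (hne : P0 ≠ P1)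
    {ε lam : ℝ} (hε : 0 < ε) (hε1 : ε < 1) (hlam : 0 < lam) :
    Filter.Tendsto (fun δ : ℝ => Mfw P0 P1 ε (lam - 2 * δ))
      (nhdsWithin 0 (Set.Ioo 0 (lam / 2))) (nhds (Mfw P0 P1 ε lam)) :=
  appendixC_continuity_converse_general P0 P1 hP1 hfs0 hfs1 hlam
end
end

section
/- (Claim 5, strong contamination achievability.) Fix ε ∈ (0,1), λ > 0 and δ > 0. For each n define E^adv_{1|0}(n) as the supremum, over all adversaries A : 𝒳^n → 𝒳^n such that A(x^n) differs from x^n in at most nε coordinates for every x^n, of the probability P_{X^n∼P₀^n}(D(P_{A(X^n)} ‖ P₁) ≤ λ + δ). Then liminf_{n→∞} −(1/n) log E^adv_{1|0}(n) ≥ min over p,q ∈ Δ with d_TV(q,p) ≤ ε and D(p‖P₁) ≤ λ + δ of D(q‖P₀). -/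
open scoped BigOperators ENNReal Classical
open Filter

noncomputable section

/-- Worst-case error in Claim 5: supremum, over (deterministic) strong-contamination
adversaries changing at most `nε` coordinates, of the probability that the type of the
corrupted samples lands in `B_KL(P1, t)`, when `X^n` is i.i.d. `P0`. -/
def EadvClaim5 {𝒳 : Type*} [Fintype 𝒳] [DecidableEq 𝒳] (P0 P1 : 𝒳 → ℝ) (ε t : ℝ)
    (n : ℕ) : ℝ :=
  sSup {e : ℝ | ∃ A : (Fin n → 𝒳) → Fin n → 𝒳,
    (∀ x, ((Finset.univ.filter fun i => A x i ≠ x i).card : ℝ) ≤ (n : ℝ) * ε) ∧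
    e = ∑ x, iid P0 x *
          (if KL (typeOf (A x)) P1 ≤ ENNReal.ofReal t then (1 : ℝ) else 0)}

/-! An adversary altering at most `nε` coordinates moves the empirical type by at most `ε` in total
variation, so whenever the corrupted type lies in the KL ball `B_KL(P₁, λ + δ)`, the clean type lies
in the `ε`-thickening `C` of that ball. By the method of types, the type of an i.i.d. `P₀` string
lies in `C` with probability at most `(n + 1)^|𝒳| · exp(-n · inf_C D(·‖P₀))`, and the polynomial
factor vanishes in the exponent. The error probability must also be positive for large `n`
(otherwise `-log` takes its junk value `0`): types of long strings approximate `P₁`, so some string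
has its type in the ball, and the identity adversary already errs on it. -/

open Finset Real Topology InformationTheory

lemma sum_iid_eq_one {𝒳 : Type*} [Fintype 𝒳] {P : 𝒳 → ℝ} (hP : P ∈ simplex 𝒳) {n : ℕ} :
    ∑ x : Fin n → 𝒳, iid P x = 1 := by
  simp [iid, ← Fintype.prod_sum, hP.2]

section RelativeEntropy

variable {𝒳 : Type*} [Fintype 𝒳]

def relEntropy (q P : 𝒳 → ℝ) : ℝ := ∑ a, q a * log (q a / P a)

lemma KL_eq_ofReal_relEntropy {P : 𝒳 → ℝ} (hP : ∀ a, 0 < P a) (q : 𝒳 → ℝ) :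
    KL q P = ENNReal.ofReal (relEntropy q P) :=
  if_pos fun a h => absurd h (hP a).ne'

lemma mul_log_div_eq_mul_klFun (q : ℝ) {p : ℝ} (hp : p ≠ 0) :
    q * log (q / p) = p * klFun (q / p) + q - p := by
  rw [klFun_apply]; field_simp; ring

lemma relEntropy_nonneg {q P : 𝒳 → ℝ} (hq : q ∈ simplex 𝒳) (hP : P ∈ simplex 𝒳)
    (hPpos : ∀ a, 0 < P a) : 0 ≤ relEntropy q P := by
  have hklFun : relEntropy q P = ∑ a, P a * klFun (q a / P a) := by
    simp only [relEntropy, fun a => mul_log_div_eq_mul_klFun (q a) (hPpos a).ne',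
      sum_sub_distrib, sum_add_distrib, hq.2, hP.2, add_sub_cancel_right]
  rw [hklFun]
  exact sum_nonneg fun a _ =>
    mul_nonneg (hPpos a).le (klFun_nonneg (div_nonneg (hq.1 a) (hPpos a).le))

lemma continuous_relEntropy {P : 𝒳 → ℝ} (hP : ∀ a, 0 < P a) :
    Continuous fun q => relEntropy q P := by
  simp only [relEntropy, fun (q : 𝒳 → ℝ) a => mul_log_div_eq_mul_klFun (q a) (hP a).ne']
  have := continuous_klFun
  fun_prop

lemma relEntropy_self {P : 𝒳 → ℝ} (hP : ∀ a, 0 < P a) : relEntropy P P = 0 := by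
  simp [relEntropy, div_self (hP _).ne']

end RelativeEntropy

lemma tendsto_natFloor_mul_div_natCast {r : ℝ} (hr : 0 ≤ r) :
    Tendsto (fun n : ℕ => (⌊r * n⌋₊ : ℝ) / n) atTop (𝓝 r) :=
  (tendsto_nat_floor_mul_div_atTop hr).comp tendsto_natCast_atTop_atTop

lemma tendsto_log_natCast_add_one_div :
    Tendsto (fun n : ℕ => log ((n : ℝ) + 1) / n) atTop (𝓝 0) := by
  have hlog : Tendsto (fun n : ℕ => log ((n : ℝ) + 1) / ((n : ℝ) + 1)) atTop (𝓝 0) :=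
    isLittleO_log_id_atTop.tendsto_div_nhds_zero.comp
      (tendsto_atTop_add_const_right _ 1 tendsto_natCast_atTop_atTop)
  have hratio : Tendsto (fun n : ℕ => (n : ℝ) / (n + 1)) atTop (𝓝 1) :=
    tendsto_natCast_div_add_atTop 1
  simpa using (hlog.div hratio one_ne_zero).congr' ((eventually_ne_atTop 0).mono fun n hn => by
    simp only [Pi.div_apply]
    field_simp)

lemma expLB_of_le_pow_mul_exp {E : ℕ → ℝ} {L : ℝ} (k : ℕ) (hpos : ∀ᶠ n in atTop, 0 < E n)
    (hle : ∀ᶠ n in atTop, E n ≤ ((n : ℝ) + 1) ^ k * exp (-(n * L))) : ExpLB E L := by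
  have hlower : Tendsto (fun n : ℕ => L - k * (log ((n : ℝ) + 1) / n)) atTop (𝓝 L) := by
    simpa using tendsto_const_nhds.sub (tendsto_log_natCast_add_one_div.const_mul (k : ℝ))
  calc (L : EReal) = liminf (fun n : ℕ => ((L - k * (log ((n : ℝ) + 1) / n) : ℝ) : EReal)) atTop :=
        (EReal.tendsto_coe.2 hlower).liminf_eq.symm
    _ ≤ _ := by
        refine liminf_le_liminf ?_
        filter_upwards [hpos, hle, eventually_gt_atTop 0] with n hEpos hEle hn
        have hlogE : log (E n) ≤ k * log ((n : ℝ) + 1) - n * L := by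
          have := log_le_log hEpos hEle
          rwa [log_mul (by positivity) (exp_pos _).ne', log_pow, log_exp, ← sub_eq_add_neg] at this
        rw [EReal.coe_le_coe_iff, le_div_iff₀ (by positivity)]
        field_simp
        linarith

section Types

variable {𝒳 : Type*} [Fintype 𝒳] [DecidableEq 𝒳] {n : ℕ}

lemma typeOf_mem_simplex (hn : n ≠ 0) (x : Fin n → 𝒳) : typeOf x ∈ simplex 𝒳 := by
  refine ⟨fun a => by unfold typeOf; positivity, ?_⟩
  simp only [typeOf, ← sum_div, ← Nat.cast_sum]
  rw [← card_eq_sum_card_fiberwise fun i _ => mem_univ (x i), card_univ, Fintype.card_fin]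
  exact div_self (Nat.cast_ne_zero.2 hn)

lemma iid_eq_prod_pow_card (P : 𝒳 → ℝ) (x : Fin n → 𝒳) :
    iid P x = ∏ a, P a ^ #{i | x i = a} := by
  rw [iid, ← prod_fiberwise univ x]
  refine prod_congr rfl fun a _ => ?_
  rw [prod_congr rfl fun i hi => congrArg P (mem_filter.1 hi).2, prod_const]

lemma iid_eq_iid_typeOf_mul_exp (hn : n ≠ 0) {P : 𝒳 → ℝ} (hP : ∀ a, 0 < P a)
    (x : Fin n → 𝒳) :
    iid P x = iid (typeOf x) x * exp (-(n * relEntropy (typeOf x) P)) := by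
  have hcount : ∀ a, (n : ℝ) * typeOf x a = #{i | x i = a} := fun a =>
    mul_div_cancel₀ _ (Nat.cast_ne_zero.2 hn)
  simp only [iid_eq_prod_pow_card, relEntropy, mul_sum, ← mul_assoc, hcount, ← sum_neg_distrib,
    exp_sum, ← prod_mul_distrib]
  refine prod_congr rfl fun a _ => ?_
  rcases (typeOf_mem_simplex hn x).1 a |>.eq_or_lt with hq | hq
  · have hzero : (#{i | x i = a} : ℝ) = 0 := by rw [← hcount, ← hq, mul_zero]
    simp [Nat.cast_eq_zero.1 hzero]
  · rw [neg_mul_eq_mul_neg, ← log_inv, exp_nat_mul, exp_log (by have := hP a; positivity),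
      ← mul_pow]
    congr 1
    field_simp

lemma sum_iid_typeClass_le (hn : n ≠ 0) {P : 𝒳 → ℝ} (hP : ∀ a, 0 < P a) (x : Fin n → 𝒳) :
    ∑ y : Fin n → 𝒳 with typeOf y = typeOf x, iid P y ≤ exp (-(n * relEntropy (typeOf x) P)) := by
  have hq := typeOf_mem_simplex hn x
  set bound := exp (-(n * relEntropy (typeOf x) P))
  calc ∑ y : Fin n → 𝒳 with typeOf y = typeOf x, iid P y
      = (∑ y : Fin n → 𝒳 with typeOf y = typeOf x, iid (typeOf x) y) * bound := by
        rw [sum_mul]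
        refine sum_congr rfl fun y hy => ?_
        rw [iid_eq_iid_typeOf_mul_exp hn hP y, (mem_filter.1 hy).2]
    _ ≤ (∑ y : Fin n → 𝒳, iid (typeOf x) y) * bound :=
        mul_le_mul_of_nonneg_right (sum_le_sum_of_subset_of_nonneg (filter_subset _ _)
          fun y _ _ => prod_nonneg fun i _ => hq.1 _) (exp_pos _).le
    _ = bound := by rw [sum_iid_eq_one hq, one_mul]

lemma card_image_typeOf_le :
    #((univ : Finset (Fin n → 𝒳)).image typeOf) ≤ (n + 1) ^ Fintype.card 𝒳 := by
  let counts : (Fin n → 𝒳) → 𝒳 → Fin (n + 1) := fun x a =>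
    ⟨#{i | x i = a}, Nat.lt_succ_of_le ((card_filter_le _ _).trans_eq (card_fin n))⟩
  have hfactor : (typeOf : (Fin n → 𝒳) → 𝒳 → ℝ)
      = (fun c : 𝒳 → Fin (n + 1) => fun a => ((c a : ℕ) : ℝ) / n) ∘ counts := rfl
  rw [hfactor, ← image_image]
  calc _ ≤ #(univ.image counts) := card_image_le
    _ ≤ Fintype.card (𝒳 → Fin (n + 1)) := card_le_univ _
    _ = _ := by simp

lemma sum_iid_typeOf_mem_le (hn : n ≠ 0) {P : 𝒳 → ℝ} (hP : ∀ a, 0 < P a)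
    {C : Set (𝒳 → ℝ)} {L : ℝ} (hC : ∀ q ∈ C, L ≤ relEntropy q P) :
    ∑ x : Fin n → 𝒳 with typeOf x ∈ C, iid P x ≤
      ((n : ℝ) + 1) ^ Fintype.card 𝒳 * exp (-(n * L)) := by
  set T : Finset (Fin n → 𝒳) := {x | typeOf x ∈ C}
  calc ∑ x ∈ T, iid P x
      = ∑ q ∈ T.image typeOf, ∑ x ∈ T with typeOf x = q, iid P x :=
        (sum_fiberwise_of_maps_to (fun x hx => mem_image_of_mem typeOf hx) _).symm
    _ ≤ ∑ _q ∈ T.image typeOf, exp (-(n * L)) := by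
        refine sum_le_sum fun q hq => ?_
        obtain ⟨x, hx, rfl⟩ := mem_image.1 hq
        calc _ ≤ ∑ y : Fin n → 𝒳 with typeOf y = typeOf x, iid P y :=
              sum_le_sum_of_subset_of_nonneg (filter_subset_filter _ (subset_univ _))
                fun y _ _ => prod_nonneg fun i _ => (hP _).le
          _ ≤ exp (-(n * relEntropy (typeOf x) P)) := sum_iid_typeClass_le hn hP x
          _ ≤ exp (-(n * L)) := by gcongr; exact hC _ (mem_filter.1 hx).2
    _ = #(T.image typeOf) * exp (-(n * L)) := by rw [sum_const, nsmul_eq_mul]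
    _ ≤ ((n : ℝ) + 1) ^ Fintype.card 𝒳 * exp (-(n * L)) := by
        gcongr
        exact_mod_cast (card_le_card (image_subset_image (filter_subset _ _))).trans
          card_image_typeOf_le

lemma sum_abs_indicator_sub_le (u v : 𝒳) :
    ∑ a, |(if u = a then 1 else 0) - (if v = a then 1 else 0 : ℝ)| ≤ if v ≠ u then 2 else 0 := by
  by_cases h : v = u
  · simp [h]
  · calc _ ≤ ∑ a, ((if u = a then 1 else 0) + (if v = a then 1 else 0 : ℝ)) :=
          sum_le_sum fun a _ => (abs_sub _ _).trans (by split_ifs <;> norm_num)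
      _ = _ := by norm_num [sum_add_distrib, h]

lemma dTV_typeOf_le (x y : Fin n → 𝒳) :
    dTV (typeOf x) (typeOf y) ≤ (#{i | y i ≠ x i} : ℝ) / n := by
  set d : 𝒳 → Fin n → ℝ := fun a i => (if x i = a then 1 else 0) - (if y i = a then 1 else 0)
  have hdiff : ∀ a, typeOf x a - typeOf y a = (∑ i, d a i) / n := fun a => by
    simp only [d, typeOf, card_filter, Nat.cast_sum, Nat.cast_ite, Nat.cast_one, Nat.cast_zero,
      sum_sub_distrib, sub_div]
  calc dTV (typeOf x) (typeOf y) = (∑ a, |∑ i, d a i| / n) / 2 := by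
        simp only [dTV, hdiff, abs_div, Nat.abs_cast]
    _ ≤ (∑ i, ∑ a, |d a i|) / n / 2 := by
        rw [sum_comm, ← sum_div]
        gcongr
        exact abs_sum_le_sum_abs _ _
    _ ≤ (∑ i, if y i ≠ x i then (2 : ℝ) else 0) / n / 2 := by
        gcongr with i
        exact sum_abs_indicator_sub_le (x i) (y i)
    _ = (#{i | y i ≠ x i} : ℝ) / n := by
        rw [← sum_filter, sum_const, nsmul_eq_mul]; ring

lemma exists_fun_card_fiber_eq (c : 𝒳 → ℕ) (hc : ∑ a, c a = n) :
    ∃ x : Fin n → 𝒳, ∀ a, #{i | x i = a} = c a := by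
  let φ : Fin n ≃ Σ a, Fin (c a) := Fintype.equivOfCardEq (by simp [hc])
  refine ⟨fun i => (φ i).1, fun a => ?_⟩
  rw [← Fintype.card_subtype, Fintype.card_congr ((φ.subtypeEquiv fun i => Iff.rfl).trans
    (Equiv.sigmaSubtype a)), Fintype.card_fin]

lemma exists_tendsto_typeOf {P : 𝒳 → ℝ} (hP : P ∈ simplex 𝒳) :
    ∃ x : ∀ n, Fin n → 𝒳, Tendsto (fun n => typeOf (x n)) atTop (𝓝 P) := by
  obtain ⟨a₀⟩ : Nonempty 𝒳 := by
    by_contra h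
    simpa [not_nonempty_iff.1 h] using hP.2
  set rest : ℕ → ℕ := fun n => ∑ b ∈ univ.erase a₀, ⌊P b * n⌋₊
  have hrest : ∀ n, rest n ≤ n := fun n => by
    have : ∑ b ∈ univ.erase a₀, (⌊P b * n⌋₊ : ℝ) ≤ ∑ b, P b * n :=
      (sum_le_sum fun b _ => Nat.floor_le (by have := hP.1 b; positivity)).trans
        (sum_le_sum_of_subset_of_nonneg (erase_subset _ _) fun b _ _ => by
          have := hP.1 b; positivity)
    rw [← sum_mul, hP.2, one_mul] at this
    exact_mod_cast this
  set c : ℕ → 𝒳 → ℕ := fun n a => if a = a₀ then n - rest n else ⌊P a * n⌋₊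
  have hc : ∀ n, ∑ a, c n a = n := fun n => by
    rw [← add_sum_erase _ _ (mem_univ a₀), sum_congr rfl fun b hb => if_neg (ne_of_mem_erase hb)]
    simp only [c, if_pos rfl]
    exact Nat.sub_add_cancel (hrest n)
  choose x hx using fun n => exists_fun_card_fiber_eq (c n) (hc n)
  refine ⟨x, tendsto_pi_nhds.2 fun a => ?_⟩
  have htypeOf : ∀ n, typeOf (x n) a = (c n a : ℝ) / n := fun n => by rw [typeOf, hx]
  simp only [htypeOf, c]
  split_ifs with ha
  · subst ha
    have hlim : Tendsto (fun n : ℕ => 1 - ∑ b ∈ univ.erase a, (⌊P b * n⌋₊ : ℝ) / n) atTop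
        (𝓝 (1 - ∑ b ∈ univ.erase a, P b)) :=
      tendsto_const_nhds.sub
        (tendsto_finsetSum _ fun b _ => tendsto_natFloor_mul_div_natCast (hP.1 b))
    have hmass : 1 - ∑ b ∈ univ.erase a, P b = P a := by
      rw [← hP.2, ← add_sum_erase _ _ (mem_univ a), add_sub_cancel_right]
    rw [hmass] at hlim
    refine hlim.congr' ((eventually_ne_atTop 0).mono fun n hn => ?_)
    dsimp only
    rw [Nat.cast_sub (hrest n), sub_div, div_self (Nat.cast_ne_zero.2 hn), Nat.cast_sum, sum_div]
  · exact tendsto_natFloor_mul_div_natCast (hP.1 a)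

lemma eventually_exists_KL_typeOf_le {P : 𝒳 → ℝ} (hP : P ∈ simplex 𝒳) (hPpos : ∀ a, 0 < P a)
    {t : ℝ} (ht : 0 < t) :
    ∀ᶠ n in atTop, ∃ x : Fin n → 𝒳, KL (typeOf x) P ≤ ENNReal.ofReal t := by
  obtain ⟨x, hx⟩ := exists_tendsto_typeOf hP
  have hlim : Tendsto (fun n => relEntropy (typeOf (x n)) P) atTop (𝓝 0) := by
    simpa only [relEntropy_self hPpos, Function.comp_def] using
      ((continuous_relEntropy hPpos).tendsto P).comp hx
  filter_upwards [hlim.eventually_le_const ht] with n hn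
  exact ⟨x n, (KL_eq_ofReal_relEntropy hPpos _).trans_le (ENNReal.ofReal_le_ofReal hn)⟩

def tvThickening (S : Set (𝒳 → ℝ)) (ε : ℝ) : Set (𝒳 → ℝ) :=
  {q | q ∈ simplex 𝒳 ∧ ∃ p ∈ S, dTV q p ≤ ε}

lemma EadvClaim5_le_sum_iid (hn : n ≠ 0) {P0 : 𝒳 → ℝ} (hP0 : ∀ a, 0 ≤ P0 a) (P1 : 𝒳 → ℝ)
    (ε t : ℝ) :
    EadvClaim5 P0 P1 ε t n ≤
      ∑ x : Fin n → 𝒳 with typeOf x ∈ tvThickening (BKL P1 t) ε, iid P0 x := by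
  refine Real.sSup_le ?_ (sum_nonneg fun x _ => prod_nonneg fun i _ => hP0 _)
  rintro _ ⟨A, hA, rfl⟩
  rw [sum_filter]
  refine sum_le_sum fun x _ => ?_
  split_ifs with hdetect hclean
  · rw [mul_one]
  · refine absurd ⟨typeOf_mem_simplex hn x, typeOf (A x),
      ⟨typeOf_mem_simplex hn (A x), hdetect⟩, (dTV_typeOf_le x (A x)).trans ?_⟩ hclean
    rw [div_le_iff₀ (by positivity), mul_comm]
    exact hA x
  · rw [mul_zero]; exact prod_nonneg fun i _ => hP0 _
  · rw [mul_zero]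

lemma iid_le_EadvClaim5 {P0 : 𝒳 → ℝ} (hP0 : ∀ a, 0 ≤ P0 a) {P1 : 𝒳 → ℝ} {ε t : ℝ}
    (hε : 0 ≤ ε) {x : Fin n → 𝒳} (hx : KL (typeOf x) P1 ≤ ENNReal.ofReal t) :
    iid P0 x ≤ EadvClaim5 P0 P1 ε t n := by
  have hiid : ∀ y : Fin n → 𝒳, 0 ≤ iid P0 y := fun y => prod_nonneg fun i _ => hP0 _
  have hterm : ∀ (A : (Fin n → 𝒳) → Fin n → 𝒳) y,
      0 ≤ iid P0 y * (if KL (typeOf (A y)) P1 ≤ ENNReal.ofReal t then (1 : ℝ) else 0) ∧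
      iid P0 y * (if KL (typeOf (A y)) P1 ≤ ENNReal.ofReal t then (1 : ℝ) else 0) ≤ iid P0 y :=
    fun A y => by split_ifs <;> simp [hiid y]
  calc iid P0 x = iid P0 x * (if KL (typeOf (id x)) P1 ≤ ENNReal.ofReal t then 1 else 0) := by
        rw [id, if_pos hx, mul_one]
    _ ≤ ∑ y, iid P0 y * (if KL (typeOf (id y)) P1 ≤ ENNReal.ofReal t then 1 else 0) :=
        single_le_sum (fun y _ => (hterm id y).1) (mem_univ x)
    _ ≤ EadvClaim5 P0 P1 ε t n := by
        refine le_csSup ⟨∑ y : Fin n → 𝒳, iid P0 y, ?_⟩ ⟨id, fun y => by simp; positivity, rfl⟩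
        rintro _ ⟨A, -, rfl⟩
        exact sum_le_sum fun y _ => (hterm A y).2

lemma eventually_EadvClaim5_pos {P0 P1 : 𝒳 → ℝ}
    (hP0 : ∀ a, 0 < P0 a) (hP1 : P1 ∈ simplex 𝒳) (hP1pos : ∀ a, 0 < P1 a) {ε t : ℝ}
    (hε : 0 ≤ ε) (ht : 0 < t) :
    ∀ᶠ n in atTop, 0 < EadvClaim5 P0 P1 ε t n := by
  filter_upwards [eventually_exists_KL_typeOf_le hP1 hP1pos ht] with n ⟨x, hx⟩
  exact (prod_pos fun i _ => hP0 _).trans_le (iid_le_EadvClaim5 (fun a => (hP0 a).le) hε hx)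

end Types

theorem claim5_strong_achievability_general {𝒳 : Type*} [Fintype 𝒳] [DecidableEq 𝒳]
    (P0 P1 : 𝒳 → ℝ) (hP0 : P0 ∈ simplex 𝒳) (hP1 : P1 ∈ simplex 𝒳)
    (hfs0 : ∀ x, 0 < P0 x) (hfs1 : ∀ x, 0 < P1 x)
    {ε lam δ : ℝ} (hε : 0 < ε) (hlam : 0 < lam) (hδ : 0 < δ) :
    ((⨅ p ∈ simplex 𝒳, ⨅ q ∈ simplex 𝒳,
        ⨅ (_ : dTV q p ≤ ε), ⨅ (_ : KL p P1 ≤ ENNReal.ofReal (lam + δ)),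
          KL q P0 : ℝ≥0∞) : EReal) ≤
      Filter.liminf (fun n : ℕ =>
        ((-(Real.log (EadvClaim5 P0 P1 ε (lam + δ) n)) / n : ℝ) : EReal))
        Filter.atTop := by
  set C := tvThickening (BKL P1 (lam + δ)) ε
  set L := ⨅ p ∈ simplex 𝒳, ⨅ q ∈ simplex 𝒳, ⨅ (_ : dTV q p ≤ ε),
    ⨅ (_ : KL p P1 ≤ ENNReal.ofReal (lam + δ)), KL q P0
  have hL_le : ∀ q ∈ C, L ≤ KL q P0 := by
    rintro q ⟨hq, p, ⟨hp, hpP1⟩, hqp⟩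
    exact iInf₂_le_of_le p hp <| iInf₂_le_of_le q hq <| iInf_le_of_le hqp <| iInf_le _ hpP1
  have hP1C : P1 ∈ C := by
    refine ⟨hP1, P1, ⟨hP1, ?_⟩, by simp [dTV, hε.le]⟩
    simp [KL_eq_ofReal_relEntropy hfs1, relEntropy_self hfs1]
  have hL_ne_top : L ≠ ⊤ :=
    ne_top_of_le_ne_top (by simp [KL_eq_ofReal_relEntropy hfs0]) (hL_le P1 hP1C)
  have hL_le_relEntropy : ∀ q ∈ C, L.toReal ≤ relEntropy q P0 := fun q hq =>
    ENNReal.toReal_le_of_le_ofReal (relEntropy_nonneg hq.1 hP0 hfs0)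
      ((hL_le q hq).trans_eq (KL_eq_ofReal_relEntropy hfs0 q))
  rw [← EReal.coe_ennreal_toReal hL_ne_top]
  refine expLB_of_le_pow_mul_exp (Fintype.card 𝒳)
    (eventually_EadvClaim5_pos hfs0 hP1 hfs1 hε.le (by positivity)) ?_
  filter_upwards [eventually_ne_atTop 0] with n hn
  exact (EadvClaim5_le_sum_iid hn (fun a => (hfs0 a).le) P1 ε _).trans
    (sum_iid_typeOf_mem_le hn hfs0 hL_le_relEntropy)

/-- **Claim 5** (strong contamination achievability). -/
theorem claim5_strong_achievability {𝒳 : Type*} [Fintype 𝒳] [DecidableEq 𝒳]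
    [Nonempty 𝒳]
    (P0 P1 : 𝒳 → ℝ) (hP0 : P0 ∈ simplex 𝒳) (hP1 : P1 ∈ simplex 𝒳)
    (hfs0 : ∀ x, 0 < P0 x) (hfs1 : ∀ x, 0 < P1 x) (hne : P0 ≠ P1)
    {ε lam δ : ℝ} (hε : 0 < ε) (hε1 : ε < 1) (hlam : 0 < lam) (hδ : 0 < δ) :
    ((⨅ p ∈ simplex 𝒳, ⨅ q ∈ simplex 𝒳,
        ⨅ (_ : dTV q p ≤ ε), ⨅ (_ : KL p P1 ≤ ENNReal.ofReal (lam + δ)),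
          KL q P0 : ℝ≥0∞) : EReal) ≤
      Filter.liminf (fun n : ℕ =>
        ((-(Real.log (EadvClaim5 P0 P1 ε (lam + δ) n)) / n : ℝ) : EReal))
        Filter.atTop :=
  claim5_strong_achievability_general P0 P1 hP0 hP1 hfs0 hfs1 hε hlam hδ
end
end

section
/- (Appendix D continuity claim, achievability side.) Fix ε ∈ (0,1) and λ > 0. Define, for t ≥ 0, K(t) = min over p,q ∈ Δ satisfying d_TV(p,q) ≤ ε and D(p‖P₁) ≤ t of D(q‖P₀). Then lim_{δ→0⁺} K(λ+δ) = K(λ). -/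
/-!
`K` is antitone, so `K(λ + δ) ≤ K(λ)`. Conversely, mixing a feasible pair `(p, q)` for `K(λ + δ)`
with `(P₁, P₁)` in proportion `a = δ / (λ + δ)` gives, by convexity of `D(·‖P₁)` and `D(·‖P₀)`, a
feasible pair for `K(λ)`, whence `K(λ) ≤ K(λ + δ) + a D(P₁‖P₀)`, and `a → 0`.
-/

open scoped BigOperators ENNReal Classical
open Filter

noncomputable section

/-- `K(t) = min_{p,q ∈ Δ : d_TV(p,q) ≤ ε, D(p‖P1) ≤ t} D(q‖P0)`. -/
def Ksc {𝒳 : Type*} [Fintype 𝒳] (P0 P1 : 𝒳 → ℝ) (ε t : ℝ) : ℝ≥0∞ :=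
  ⨅ p ∈ simplex 𝒳, ⨅ q ∈ simplex 𝒳,
    ⨅ (_ : dTV p q ≤ ε), ⨅ (_ : KL p P1 ≤ ENNReal.ofReal t), KL q P0

section KullbackLeibler

variable {𝒳 : Type*} [Fintype 𝒳]

theorem convexOn_mul_log_div {c : ℝ} (hc : 0 < c) :
    ConvexOn ℝ (Set.Ici 0) fun t => t * Real.log (t / c) := by
  have h : (fun t => t * Real.log (t / c)) = fun t => t * Real.log t + (-Real.log c) * t := by
    funext t
    rcases eq_or_ne t 0 with rfl | ht
    · simp
    · rw [Real.log_div ht hc.ne']; ring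
  rw [h]
  exact Real.convexOn_mul_log.add ((LinearMap.mulLeft ℝ (-Real.log c)).convexOn (convex_Ici 0))

theorem KL_eq_ofReal {p Q : 𝒳 → ℝ} (hQ : ∀ x, 0 < Q x) :
    KL p Q = ENNReal.ofReal (∑ x, p x * Real.log (p x / Q x)) :=
  if_pos fun x hx => absurd hx (hQ x).ne'

theorem KL_ne_top {p Q : 𝒳 → ℝ} (hQ : ∀ x, 0 < Q x) : KL p Q ≠ ⊤ := by
  rw [KL_eq_ofReal hQ]; exact ENNReal.ofReal_ne_top

theorem KL_self_s14 {Q : 𝒳 → ℝ} (hQ : ∀ x, 0 < Q x) : KL Q Q = 0 := by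
  simp [KL_eq_ofReal hQ, div_self (hQ _).ne']

theorem KL_mix_le_s14 {a : ℝ} (ha : 0 ≤ a) (ha1 : a ≤ 1) {p r Q : 𝒳 → ℝ}
    (hp : ∀ x, 0 ≤ p x) (hr : ∀ x, 0 ≤ r x) (hQ : ∀ x, 0 < Q x) :
    KL (mix a p r) Q ≤ ENNReal.ofReal (1 - a) * KL p Q + ENNReal.ofReal a * KL r Q := by
  have hsum : ∑ x, mix a p r x * Real.log (mix a p r x / Q x) ≤
      (1 - a) * ∑ x, p x * Real.log (p x / Q x) + a * ∑ x, r x * Real.log (r x / Q x) := by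
    rw [Finset.mul_sum, Finset.mul_sum, ← Finset.sum_add_distrib]
    exact Finset.sum_le_sum fun x _ =>
      (convexOn_mul_log_div (hQ x)).2 (hp x) (hr x) (sub_nonneg.2 ha1) ha (by ring)
  rw [KL_eq_ofReal hQ, KL_eq_ofReal hQ, KL_eq_ofReal hQ,
    ← ENNReal.ofReal_mul (sub_nonneg.2 ha1), ← ENNReal.ofReal_mul ha]
  exact (ENNReal.ofReal_le_ofReal hsum).trans ENNReal.ofReal_add_le

end KullbackLeibler

section Mixture

variable {𝒳 : Type*} [Fintype 𝒳]

theorem mix_mem_simplex_s14 {a : ℝ} (ha : 0 ≤ a) (ha1 : a ≤ 1) {p r : 𝒳 → ℝ}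
    (hp : p ∈ simplex 𝒳) (hr : r ∈ simplex 𝒳) : mix a p r ∈ simplex 𝒳 := by
  refine ⟨fun x => add_nonneg (mul_nonneg (sub_nonneg.2 ha1) (hp.1 x)) (mul_nonneg ha (hr.1 x)), ?_⟩
  simp only [mix]
  rw [Finset.sum_add_distrib, ← Finset.mul_sum, ← Finset.mul_sum, hp.2, hr.2]
  ring

theorem dTV_nonneg (p q : 𝒳 → ℝ) : 0 ≤ dTV p q :=
  div_nonneg (Finset.sum_nonneg fun _ _ => abs_nonneg _) zero_le_two

theorem dTV_mix {a : ℝ} (ha1 : a ≤ 1) (p q r : 𝒳 → ℝ) :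
    dTV (mix a p r) (mix a q r) = (1 - a) * dTV p q := by
  have h : ∀ x, mix a p r x - mix a q r x = (1 - a) * (p x - q x) := fun x => by
    simp only [mix]; ring
  simp only [dTV, h, abs_mul, abs_of_nonneg (sub_nonneg.2 ha1), ← Finset.mul_sum]
  ring

theorem dTV_mix_le {a : ℝ} (ha : 0 ≤ a) (ha1 : a ≤ 1) (p q r : 𝒳 → ℝ) :
    dTV (mix a p r) (mix a q r) ≤ dTV p q := by
  rw [dTV_mix ha1]
  exact mul_le_of_le_one_left (dTV_nonneg p q) (by linarith)

end Mixture

section Ksc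

variable {𝒳 : Type*} [Fintype 𝒳] {P0 P1 : 𝒳 → ℝ} {ε : ℝ}

theorem Ksc_le {t : ℝ} {p q : 𝒳 → ℝ} (hp : p ∈ simplex 𝒳) (hq : q ∈ simplex 𝒳)
    (hd : dTV p q ≤ ε) (hk : KL p P1 ≤ ENNReal.ofReal t) : Ksc P0 P1 ε t ≤ KL q P0 :=
  iInf₂_le_of_le p hp <| iInf₂_le_of_le q hq <| iInf₂_le_of_le hd hk le_rfl

theorem le_Ksc {t : ℝ} {c : ℝ≥0∞}
    (h : ∀ p ∈ simplex 𝒳, ∀ q ∈ simplex 𝒳, dTV p q ≤ ε → KL p P1 ≤ ENNReal.ofReal t →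
      c ≤ KL q P0) : c ≤ Ksc P0 P1 ε t :=
  le_iInf₂ fun p hp => le_iInf₂ fun q hq => le_iInf₂ fun hd hk => h p hp q hq hd hk

theorem Ksc_antitone : Antitone (Ksc P0 P1 ε) := fun _ _ htt' =>
  le_Ksc fun _ hp _ hq hd hk => Ksc_le hp hq hd (hk.trans (ENNReal.ofReal_le_ofReal htt'))

theorem Ksc_one_sub_mul_le (hP1 : P1 ∈ simplex 𝒳) (hfs0 : ∀ x, 0 < P0 x) (hfs1 : ∀ x, 0 < P1 x)
    {a : ℝ} (ha : 0 ≤ a) (ha1 : a ≤ 1) (t : ℝ) :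
    Ksc P0 P1 ε ((1 - a) * t) ≤ Ksc P0 P1 ε t + ENNReal.ofReal a * KL P1 P0 := by
  rw [← tsub_le_iff_right]
  refine le_Ksc fun p hp q hq hd hk => tsub_le_iff_right.2 ?_
  have hk' : KL (mix a p P1) P1 ≤ ENNReal.ofReal ((1 - a) * t) := calc
    KL (mix a p P1) P1 ≤ ENNReal.ofReal (1 - a) * KL p P1 + ENNReal.ofReal a * KL P1 P1 :=
      KL_mix_le_s14 ha ha1 hp.1 hP1.1 hfs1
    _ ≤ ENNReal.ofReal (1 - a) * ENNReal.ofReal t := by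
      rw [KL_self_s14 hfs1, mul_zero, add_zero]; gcongr
    _ = ENNReal.ofReal ((1 - a) * t) := (ENNReal.ofReal_mul (sub_nonneg.2 ha1)).symm
  calc Ksc P0 P1 ε ((1 - a) * t) ≤ KL (mix a q P1) P0 :=
        Ksc_le (mix_mem_simplex_s14 ha ha1 hp hP1) (mix_mem_simplex_s14 ha ha1 hq hP1)
          ((dTV_mix_le ha ha1 p q P1).trans hd) hk'
    _ ≤ ENNReal.ofReal (1 - a) * KL q P0 + ENNReal.ofReal a * KL P1 P0 :=
        KL_mix_le_s14 ha ha1 hq.1 hP1.1 hfs0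
    _ ≤ KL q P0 + ENNReal.ofReal a * KL P1 P0 := by
        gcongr
        exact mul_le_of_le_one_left' (ENNReal.ofReal_le_one.2 (by linarith))

theorem Ksc_le_Ksc_add (hP1 : P1 ∈ simplex 𝒳) (hfs0 : ∀ x, 0 < P0 x) (hfs1 : ∀ x, 0 < P1 x)
    {t δ : ℝ} (ht : 0 < t) (hδ : 0 ≤ δ) :
    Ksc P0 P1 ε t ≤ Ksc P0 P1 ε (t + δ) + ENNReal.ofReal (δ / (t + δ)) * KL P1 P0 := by
  have hpos : 0 < t + δ := by linarith
  have hmix := Ksc_one_sub_mul_le (ε := ε) hP1 hfs0 hfs1 (div_nonneg hδ hpos.le)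
    ((div_le_one hpos).2 (by linarith)) (t + δ)
  rwa [one_sub_div hpos.ne', add_sub_cancel_right, div_mul_cancel₀ _ hpos.ne'] at hmix

end Ksc

theorem appendixD_continuity_achievability_general {𝒳 : Type*} [Fintype 𝒳]
    (P0 P1 : 𝒳 → ℝ) (hP1 : P1 ∈ simplex 𝒳)
    (hfs0 : ∀ x, 0 < P0 x) (hfs1 : ∀ x, 0 < P1 x)
    {ε lam : ℝ} (hlam : 0 < lam) :
    Filter.Tendsto (fun δ : ℝ => Ksc P0 P1 ε (lam + δ))
      (nhdsWithin 0 (Set.Ioi 0)) (nhds (Ksc P0 P1 ε lam)) := by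
  set C := KL P1 P0
  have ha : Tendsto (fun δ : ℝ => ENNReal.ofReal (δ / (lam + δ)) * C)
      (nhdsWithin 0 (Set.Ioi 0)) (nhds 0) := by
    have hcont : ContinuousAt (fun δ : ℝ => δ / (lam + δ)) 0 :=
      continuousAt_id.div (continuousAt_const.add continuousAt_id) (by simpa using hlam.ne')
    have h0 : Tendsto (fun δ : ℝ => δ / (lam + δ)) (nhdsWithin 0 (Set.Ioi 0)) (nhds 0) := by
      simpa using tendsto_nhdsWithin_of_tendsto_nhds hcont.tendsto
    simpa using ENNReal.Tendsto.mul_const (ENNReal.tendsto_ofReal h0) (Or.inr (KL_ne_top hfs0))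
  refine tendsto_of_tendsto_of_tendsto_of_le_of_le'
    (g := fun δ => Ksc P0 P1 ε lam - ENNReal.ofReal (δ / (lam + δ)) * C) ?_ tendsto_const_nhds ?_ ?_
  · simpa using ENNReal.Tendsto.sub tendsto_const_nhds ha (Or.inr ENNReal.zero_ne_top)
  · filter_upwards [self_mem_nhdsWithin] with δ hδ using
      tsub_le_iff_right.2 (Ksc_le_Ksc_add hP1 hfs0 hfs1 hlam (le_of_lt hδ))
  · filter_upwards [self_mem_nhdsWithin] with δ hδ using
      Ksc_antitone (le_add_of_nonneg_right (le_of_lt hδ))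

/-- **Appendix D continuity claim (achievability side)**: `K(λ+δ) → K(λ)` as `δ → 0⁺`. -/
theorem appendixD_continuity_achievability {𝒳 : Type*} [Fintype 𝒳] [Nonempty 𝒳]
    (P0 P1 : 𝒳 → ℝ) (hP0 : P0 ∈ simplex 𝒳) (hP1 : P1 ∈ simplex 𝒳)
    (hfs0 : ∀ x, 0 < P0 x) (hfs1 : ∀ x, 0 < P1 x) (hne : P0 ≠ P1)
    {ε lam : ℝ} (hε : 0 < ε) (hε1 : ε < 1) (hlam : 0 < lam) :
    Filter.Tendsto (fun δ : ℝ => Ksc P0 P1 ε (lam + δ))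
      (nhdsWithin 0 (Set.Ioi 0)) (nhds (Ksc P0 P1 ε lam)) :=
  appendixD_continuity_achievability_general P0 P1 hP1 hfs0 hfs1 hlam

end
end
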